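/- For vectors $\eta, \zeta \in \mathbb{R}^3 \setminus \{0\}$ and $\xi = \eta + \zeta$, the cross-product null form symbol satisfies the hyperbolic bound $\left|\frac{\eta \times \zeta}{|\eta||\zeta|}\right| \lesssim \frac{|\xi|^{1/2} (|\xi| - ||\eta| - |\zeta||)^{1/2}}{|\eta|^{1/2} |\zeta|^{1/2}}$, with an absolute implicit constant. -/

import Mathlib

noncomputable section

abbrev E3 := EuclideanSpace ℝ (Fin 3)

/-- The cross product in `ℝ³` (with the Euclidean norm). -/
def cross3 (a b : E3) : E3 :=
  (WithLp.equiv 2 (Fin 3 → ℝ)).symm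
    ![a 1 * b 2 - a 2 * b 1, a 2 * b 0 - a 0 * b 2, a 0 * b 1 - a 1 * b 0]

/-!
By Lagrange's identity, `|η × ζ|² = (|η||ζ| - η·ζ)(|η||ζ| + η·ζ)`. The second factor is
`(|ξ|² - (|η| - |ζ|)²) / 2 = (|ξ| + ||η| - |ζ||)(|ξ| - ||η| - |ζ||) / 2`, the first is at most
`2|η||ζ|`, and `|ξ| + ||η| - |ζ|| ≤ 2|ξ|`. Hence `|η × ζ|² ≤ 2|η||ζ||ξ|(|ξ| - ||η| - |ζ||)`,
which is the bound with `C = √2`.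
-/

open scoped RealInnerProductSpace

theorem norm_cross3_sq (η ζ : E3) :
    ‖cross3 η ζ‖ ^ 2 = ‖η‖ ^ 2 * ‖ζ‖ ^ 2 - ⟪η, ζ⟫ ^ 2 := by
  simp only [← real_inner_self_eq_norm_sq, PiLp.inner_apply, RCLike.inner_apply, conj_trivial,
    Fin.sum_univ_three, cross3, WithLp.equiv_symm_apply, Matrix.cons_val_zero,
    Matrix.cons_val_one, Matrix.cons_val_two, Matrix.head_cons, Matrix.tail_cons]
  ring

theorem abs_norm_sub_norm_le_norm_add {G : Type*} [SeminormedAddCommGroup G] (x y : G) :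
    |‖x‖ - ‖y‖| ≤ ‖x + y‖ := by
  simpa using abs_norm_sub_norm_le x (-y)

section InnerProductSpace

variable {F : Type*} [NormedAddCommGroup F] [InnerProductSpace ℝ F]

theorem norm_add_sq_sub_sq_abs_norm_sub_norm (x y : F) :
    ‖x + y‖ ^ 2 - |‖x‖ - ‖y‖| ^ 2 = 2 * (‖x‖ * ‖y‖ + ⟪x, y⟫) := by
  rw [sq_abs, norm_add_sq_real]
  ring

theorem norm_sq_mul_norm_sq_sub_inner_sq_le (x y : F) :
    ‖x‖ ^ 2 * ‖y‖ ^ 2 - ⟪x, y⟫ ^ 2 ≤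
      2 * (‖x‖ * ‖y‖) * (‖x + y‖ * (‖x + y‖ - |‖x‖ - ‖y‖|)) := by
  have hgap := abs_norm_sub_norm_le_norm_add x y
  have hcs := abs_le.mp (abs_real_inner_le_norm x y)
  have hdiff := norm_add_sq_sub_sq_abs_norm_sub_norm x y
  calc ‖x‖ ^ 2 * ‖y‖ ^ 2 - ⟪x, y⟫ ^ 2
      = (‖x‖ * ‖y‖ - ⟪x, y⟫) * (‖x‖ * ‖y‖ + ⟪x, y⟫) := by ring
    _ ≤ (2 * (‖x‖ * ‖y‖)) * (‖x‖ * ‖y‖ + ⟪x, y⟫) := by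
      gcongr <;> linarith
    _ = (‖x‖ * ‖y‖) * ((‖x + y‖ + |‖x‖ - ‖y‖|) * (‖x + y‖ - |‖x‖ - ‖y‖|)) := by
      linear_combination -(‖x‖ * ‖y‖) * hdiff
    _ ≤ (‖x‖ * ‖y‖) * ((2 * ‖x + y‖) * (‖x + y‖ - |‖x‖ - ‖y‖|)) := by
      gcongr
      linarith
    _ = _ := by ring

end InnerProductSpace

theorem div_mul_le_sqrt_mul_div_of_sq_le {c k x y s t : ℝ} (hc : 0 ≤ c) (hk : 0 ≤ k)
    (hx : 0 < x) (hy : 0 < y) (hs : 0 ≤ s) (ht : 0 ≤ t) (h : c ^ 2 ≤ k * (x * y) * (s * t)) :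
    c / (x * y) ≤ √k * (√s * √t) / (√x * √y) := by
  have hxy : 0 < x * y := by positivity
  have hrhs : √k * (√s * √t) / (√x * √y) = √(k * (s * t) / (x * y)) := by
    rw [Real.sqrt_div' _ hxy.le, Real.sqrt_mul hk, Real.sqrt_mul hs, Real.sqrt_mul hx.le]
  rw [hrhs, Real.le_sqrt (by positivity) (by positivity), div_pow,
    div_le_div_iff₀ (by positivity) hxy]
  nlinarith

/-- Hyperbolic bound for the cross-product null form symbol: with `ξ = η + ζ`,
`|η × ζ| / (|η||ζ|) ≲ |ξ|^{1/2} (|ξ| - ||η|-|ζ||)^{1/2} / (|η|^{1/2} |ζ|^{1/2})`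
with an absolute constant. -/
theorem crossproduct_nullform_hyperbolic_bound :
    ∃ C : ℝ, 0 < C ∧ ∀ η ζ : E3, η ≠ 0 → ζ ≠ 0 →
      ‖cross3 η ζ‖ / (‖η‖ * ‖ζ‖) ≤
        C * (Real.sqrt ‖η + ζ‖ * Real.sqrt (‖η + ζ‖ - |‖η‖ - ‖ζ‖|)) /
          (Real.sqrt ‖η‖ * Real.sqrt ‖ζ‖) := by
  refine ⟨√2, by positivity, fun η ζ hη hζ => ?_⟩
  refine div_mul_le_sqrt_mul_div_of_sq_le (norm_nonneg _) zero_le_two (norm_pos_iff.mpr hη)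
    (norm_pos_iff.mpr hζ) (norm_nonneg _) (sub_nonneg.mpr (abs_norm_sub_norm_le_norm_add η ζ)) ?_
  rw [norm_cross3_sq]
  exact norm_sq_mul_norm_sq_sub_inner_sq_le η ζ
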